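/- Let A ∈ ℝ^{n×n}. The AVE Ax + |x| = b has a unique solution for every b ∈ ℝ^n if and only if A + D̄ is nonsingular for every diagonal matrix D̄ = diag(d̄_i) with d̄_i ∈ [−1, 1]. -/

import Mathlib

open Matrix

/-- A square real matrix is a `P`-matrix if all of its principal minors are positive. -/
def IsPMatrix {n : ℕ} (M : Matrix (Fin n) (Fin n) ℝ) : Prop :=
  ∀ s : Finset (Fin n), s.Nonempty →
    0 < (M.submatrix (fun i : s => (i : Fin n)) (fun i : s => (i : Fin n))).det

/-- The (unordered) singular values of a real square matrix: square roots of the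
eigenvalues of `Aᵀ * A`. -/
noncomputable def singVals {n : ℕ} (A : Matrix (Fin n) (Fin n) ℝ) : Fin n → ℝ :=
  fun i => Real.sqrt (((show (Aᵀ * A).IsHermitian by
    simpa [Matrix.conjTranspose_eq_transpose_of_trivial] using
      Matrix.isHermitian_conjTranspose_mul_self A)).eigenvalues i)

/-- `svalsDecr A i` is the `i`-th largest singular value of `A` (so `svalsDecr A 0 = σ₁`). -/
noncomputable def svalsDecr {n : ℕ} (A : Matrix (Fin n) (Fin n) ℝ) : Fin n → ℝ :=
  fun i => singVals A (Tuple.sort (singVals A) (Fin.rev i))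

/-- The maximal singular value `σ₁`. -/
noncomputable def maxSV {n : ℕ} (A : Matrix (Fin n) (Fin n) ℝ) : ℝ :=
  ⨆ i, singVals A i

/-- The minimal singular value `σₙ`. -/
noncomputable def minSV {n : ℕ} (A : Matrix (Fin n) (Fin n) ℝ) : ℝ :=
  ⨅ i, singVals A i

/-- The spectral radius of a real square matrix (as the spectral radius of its
complexification), valued in `ℝ≥0∞`. -/
noncomputable def specRad {n : ℕ} (A : Matrix (Fin n) (Fin n) ℝ) : ENNReal :=
  spectralRadius ℂ (A.map (Complex.ofReal))

/-!
For every `x, y` there is a slope vector `c` with `‖c‖∞ ≤ 1` and `|x| - |y| = diag(c) (x - y)`, so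
`F x = A x + |x|` satisfies `F x - F y = (A + diag c) (x - y)`. If all `A + D̄` are nonsingular,
compactness of the box bounds their inverses uniformly, so `F` (and every `A x + t|x|`, `|t| ≤ 1`)
is antilipschitz, hence injective. Surjectivity follows by continuation along `t = k / N`: by
Banach's fixed point theorem, a surjective antilipschitz map stays surjective under a Lipschitz
perturbation of small enough constant. Conversely, if `(A + D̄) v = 0`, then `y = (v + D̄|v|) / 2`
and `y - v` have the same image under `F`, so injectivity of `F` forces `v = 0`.
-/

open Function
open scoped NNReal

lemma exists_abs_sub_abs_eq_mul (a b : ℝ) : ∃ c, |c| ≤ 1 ∧ |a| - |b| = c * (a - b) := by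
  rcases eq_or_ne a b with rfl | hab
  · exact ⟨0, by simp⟩
  have hab' : a - b ≠ 0 := sub_ne_zero.2 hab
  refine ⟨(|a| - |b|) / (a - b), ?_, (div_mul_cancel₀ _ hab').symm⟩
  rw [abs_div, div_le_one (abs_pos.2 hab')]
  exact abs_abs_sub_abs_le_abs_sub a b

lemma abs_add_mul_abs {a d : ℝ} (hd : |d| ≤ 1) : |(a + d * |a|)| = |a| + d * a := by
  obtain ⟨hd₁, hd₂⟩ := abs_le.1 hd
  rcases le_total 0 a with ha | ha
  · rw [abs_of_nonneg ha, abs_of_nonneg (by nlinarith)]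
  · rw [abs_of_nonpos ha, abs_of_nonpos (by nlinarith)]
    ring

section Pi

variable {ι : Type*} [Fintype ι]

lemma pi_norm_abs_sub_abs_le (x y : ι → ℝ) : ‖|x| - |y|‖ ≤ ‖x - y‖ :=
  (pi_norm_le_iff_of_nonneg (norm_nonneg _)).2 fun i =>
    (abs_abs_sub_abs_le_abs_sub (x i) (y i)).trans (norm_le_pi_norm (x - y) i)

lemma lipschitzWith_smul_abs (c : ℝ) : LipschitzWith ‖c‖₊ fun x : ι → ℝ => c • |x| :=
  LipschitzWith.of_dist_le_mul fun x y => by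
    rw [dist_eq_norm, dist_eq_norm, ← smul_sub, norm_smul, coe_nnnorm]
    exact mul_le_mul_of_nonneg_left (pi_norm_abs_sub_abs_le x y) (norm_nonneg c)

lemma pi_norm_le_one_iff {d : ι → ℝ} : ‖d‖ ≤ 1 ↔ ∀ i, d i ∈ Set.Icc (-1 : ℝ) 1 := by
  simp only [pi_norm_le_iff_of_nonneg zero_le_one, Real.norm_eq_abs, abs_le, Set.mem_Icc]

end Pi

theorem Function.Surjective.add_of_antilipschitzWith_of_lipschitzWith {E F : Type*}
    [MetricSpace E] [CompleteSpace E] [Nonempty E] [NormedAddCommGroup F] {f g : E → F}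
    {K L : ℝ≥0} (hf : Surjective f) (hfK : AntilipschitzWith K f) (hgL : LipschitzWith L g)
    (hKL : K * L < 1) : Surjective (f + g) := by
  intro b
  -- a zero of `f + g - b` is a fixed point of the contraction `x ↦ f⁻¹ (b - g x)`
  set S : E → E := fun x => surjInv hf (b - g x)
  have hS : ContractingWith (K * L) S := by
    refine ⟨hKL, LipschitzWith.of_dist_le_mul fun x y => ?_⟩
    calc dist (S x) (S y) ≤ K * dist (f (S x)) (f (S y)) := hfK.le_mul_dist _ _
      _ = K * dist (g x) (g y) := by
          simp only [S, surjInv_eq, dist_sub_left]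
      _ ≤ K * (L * dist x y) := by gcongr; exact hgL.dist_le_mul x y
      _ = ↑(K * L) * dist x y := by push_cast; ring
  obtain ⟨x, hx, -⟩ := hS.exists_fixedPoint (Classical.arbitrary E) (edist_ne_top _ _)
  refine ⟨x, ?_⟩
  have : f x = b - g x := by conv_lhs => rw [← hx.eq]; exact surjInv_eq hf _
  simp [this]

section AbsoluteValueEquation

variable {n : ℕ} (A : Matrix (Fin n) (Fin n) ℝ)

attribute [local instance] Matrix.linftyOpNormedAddCommGroup

lemma exists_bound_norm_le_mul_norm_mulVec
    (hA : ∀ d : Fin n → ℝ, ‖d‖ ≤ 1 → IsUnit (A + diagonal d)) :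
    ∃ M : ℝ≥0, ∀ d : Fin n → ℝ, ‖d‖ ≤ 1 → ∀ v, ‖v‖ ≤ M * ‖(A + diagonal d) *ᵥ v‖ := by
  have hcont : ContinuousOn (fun d : Fin n → ℝ => (A + diagonal d)⁻¹)
      (Metric.closedBall 0 1) := by
    intro d hd
    refine ((continuousAt_matrix_inv _ ?_).comp (by fun_prop)).continuousWithinAt
    rw [Ring.inverse_eq_inv']
    exact continuousAt_inv₀
      ((isUnit_iff_isUnit_det _).1 (hA d (mem_closedBall_zero_iff.1 hd))).ne_zero
  obtain ⟨C, hC⟩ := (isCompact_closedBall (0 : Fin n → ℝ) 1).exists_bound_of_continuousOn hcont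
  refine ⟨⟨max C 0, le_max_right _ _⟩, fun d hd v => ?_⟩
  have hdet := (isUnit_iff_isUnit_det _).1 (hA d hd)
  calc ‖v‖ = ‖(A + diagonal d)⁻¹ *ᵥ ((A + diagonal d) *ᵥ v)‖ := by
        rw [mulVec_mulVec, nonsing_inv_mul _ hdet, one_mulVec]
    _ ≤ ‖(A + diagonal d)⁻¹‖ * ‖(A + diagonal d) *ᵥ v‖ := linfty_opNorm_mulVec _ _
    _ ≤ max C 0 * ‖(A + diagonal d) *ᵥ v‖ := by
        gcongr
        exact (hC d (mem_closedBall_zero_iff.2 hd)).trans (le_max_left _ _)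

lemma antilipschitzWith_mulVec_add_smul_abs {M : ℝ≥0}
    (hM : ∀ d : Fin n → ℝ, ‖d‖ ≤ 1 → ∀ v, ‖v‖ ≤ M * ‖(A + diagonal d) *ᵥ v‖)
    {μ : ℝ} (hμ : |μ| ≤ 1) : AntilipschitzWith M fun x => A *ᵥ x + μ • |x| := by
  refine AntilipschitzWith.of_le_mul_dist fun x y => ?_
  choose c hc hxy using fun i => exists_abs_sub_abs_eq_mul (x i) (y i)
  have hμc : ‖μ • c‖ ≤ 1 := by
    rw [norm_smul, Real.norm_eq_abs]
    exact mul_le_one₀ hμ (norm_nonneg c)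
      ((pi_norm_le_iff_of_nonneg zero_le_one).2 fun i => (Real.norm_eq_abs _).trans_le (hc i))
  have hdiff : (A *ᵥ x + μ • |x|) - (A *ᵥ y + μ • |y|) = (A + diagonal (μ • c)) *ᵥ (x - y) := by
    ext i
    simp only [Pi.sub_apply, Pi.add_apply, Pi.smul_apply, smul_eq_mul, Pi.abs_apply,
      add_mulVec, mulVec_sub, mulVec_diagonal]
    linear_combination μ * hxy i
  rw [dist_eq_norm, dist_eq_norm, hdiff]
  exact hM _ hμc _

lemma injective_mulVec_add_abs (hA : ∀ d : Fin n → ℝ, ‖d‖ ≤ 1 → IsUnit (A + diagonal d)) :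
    Injective fun x => A *ᵥ x + |x| := by
  obtain ⟨M, hM⟩ := exists_bound_norm_le_mul_norm_mulVec A hA
  simpa using (antilipschitzWith_mulVec_add_smul_abs A hM (μ := 1) (by simp)).injective

lemma surjective_mulVec_add_abs (hA : ∀ d : Fin n → ℝ, ‖d‖ ≤ 1 → IsUnit (A + diagonal d)) :
    Surjective fun x => A *ᵥ x + |x| := by
  obtain ⟨M, hM⟩ := exists_bound_norm_le_mul_norm_mulVec A hA
  obtain ⟨N, hN⟩ := exists_nat_gt (M : ℝ)
  have hN0 : (0 : ℝ) < N := M.coe_nonneg.trans_lt hN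
  -- continuation from `A` to `A + |·|` in `N` steps, each a perturbation of Lipschitz constant
  -- `1 / N < 1 / M`
  have hstep : ∀ k ≤ N, Surjective fun x => A *ᵥ x + ((k : ℝ) / N) • |x| := by
    intro k hk
    induction k with
    | zero => simpa using mulVec_surjective_iff_isUnit.2 (by simpa using hA 0 (by simp))
    | succ k ih =>
      have hkN : |(k : ℝ) / N| ≤ 1 := by
        rw [abs_of_nonneg (by positivity), div_le_one hN0]
        exact_mod_cast (Nat.le_succ k).trans hk
      have hML : M * ‖(1 : ℝ) / N‖₊ < 1 := by
        rw [← NNReal.coe_lt_coe, NNReal.coe_mul, coe_nnnorm, Real.norm_eq_abs,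
          abs_of_pos (by positivity), NNReal.coe_one, mul_one_div, div_lt_one hN0]
        exact hN
      convert (ih (Nat.le_of_succ_le hk)).add_of_antilipschitzWith_of_lipschitzWith
        (antilipschitzWith_mulVec_add_smul_abs A hM hkN) (lipschitzWith_smul_abs _) hML
        using 2 with x
      simp only [Pi.add_apply, add_assoc, ← add_smul]
      push_cast
      ring_nf
  simpa [hN0.ne'] using hstep N le_rfl

lemma injective_mulVec_of_injective_mulVec_add_abs (hF : Injective fun x => A *ᵥ x + |x|)
    {d : Fin n → ℝ} (hd : ‖d‖ ≤ 1) : Injective (A + diagonal d).mulVec := by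
  intro x x' hxx'
  set v := x - x'
  have hAv : ∀ i, (A *ᵥ v) i = -(d i * v i) := fun i => by
    have h := congrFun (show (A + diagonal d) *ᵥ v = 0 by rw [mulVec_sub, hxx', sub_self]) i
    rw [add_mulVec, Pi.add_apply, mulVec_diagonal, Pi.zero_apply] at h
    linarith
  have hd' : ∀ i, |d i| ≤ 1 := fun i => (norm_le_pi_norm d i).trans hd
  -- two preimages of the same right-hand side whose difference is the kernel vector `v`
  set y : Fin n → ℝ := fun i => (v i + d i * |v i|) / 2
  set z : Fin n → ℝ := fun i => (-v i + d i * |-v i|) / 2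
  have hyz : y - z = v := by ext i; simp only [y, z, Pi.sub_apply, abs_neg]; ring
  have hF_eq : A *ᵥ y + |y| = A *ᵥ z + |z| := by
    ext i
    have hAyz : (A *ᵥ y) i - (A *ᵥ z) i = (A *ᵥ v) i := by
      rw [← Pi.sub_apply, ← mulVec_sub, hyz]
    have hy : |y i| = (|v i| + d i * v i) / 2 := by
      simp only [y, abs_div, abs_two, abs_add_mul_abs (hd' i)]
    have hz : |z i| = (|v i| - d i * v i) / 2 := by
      rw [abs_div, abs_two, abs_add_mul_abs (hd' i), abs_neg]
      ring
    simp only [Pi.add_apply, Pi.abs_apply, hy, hz]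
    linarith [hAv i]
  have hv : v = 0 := by rw [← hyz, hF hF_eq, sub_self]
  exact sub_eq_zero.1 hv

end AbsoluteValueEquation

theorem stmt7 {n : ℕ} (A : Matrix (Fin n) (Fin n) ℝ) :
    (∀ b : Fin n → ℝ, ∃! x : Fin n → ℝ, A *ᵥ x + |x| = b) ↔
      ∀ d : Fin n → ℝ, (∀ i, d i ∈ Set.Icc (-1 : ℝ) 1) →
        IsUnit (A + Matrix.diagonal d) := by
  simp only [← pi_norm_le_one_iff, ← bijective_iff_existsUnique]
  exact ⟨fun hF d hd =>
      mulVec_injective_iff_isUnit.1 (injective_mulVec_of_injective_mulVec_add_abs A hF.1 hd),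
    fun hA => ⟨injective_mulVec_add_abs A hA, surjective_mulVec_add_abs A hA⟩⟩
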